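/- Let 𝒞 be a Z2Z4-additive code generated as a group by elements u₁,…,u_γ of order at most two and elements v₁,…,v_δ of order four, and let C = Φ(𝒞). Then the linear span ⟨C⟩ of C in Z2^(α+2β) is spanned over Z2 by the vectors {Φ(u_i)}_{i=1}^γ, {Φ(v_j)}_{j=1}^δ, {Φ(2v_j)}_{j=1}^δ, and {Φ(2(v_j*v_k))}_{1≤j<k≤δ}. -/

import Mathlib

/-- The ambient group `Z2^α × Z4^β`, with componentwise ring structure
(so `u * v` is the componentwise product). -/
abbrev Amb (α β : ℕ) := (Fin α → ZMod 2) × (Fin β → ZMod 4)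

/-- The binary space `Z2^α × (Z2²)^β ≅ Z2^(α+2β)`. -/
abbrev Bin (α β : ℕ) := (Fin α → ZMod 2) × (Fin β → ZMod 2 × ZMod 2)

/-- The Gray map `φ : Z4 → Z2²` with `φ(0)=(0,0), φ(1)=(0,1), φ(2)=(1,1), φ(3)=(1,0)`. -/
def grayPair (y : ZMod 4) : ZMod 2 × ZMod 2 :=
  match y.val with
  | 0 => (0, 0)
  | 1 => (0, 1)
  | 2 => (1, 1)
  | _ => (1, 0)

/-- The extended Gray map `Φ : Z2^α × Z4^β → Z2^(α+2β)`. -/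
def Phi {α β : ℕ} (u : Amb α β) : Bin α β :=
  (u.1, fun i => grayPair (u.2 i))

/-- The kernel `K(C) = {x | x + C = C}` of a binary code. -/
def kernelK {α β : ℕ} (C : Set (Bin α β)) : Set (Bin α β) :=
  {x | (fun y => x + y) '' C = C}

/-- The rank of a binary code: the `Z2`-dimension of its linear span. -/
noncomputable def rankOf {α β : ℕ} (C : Set (Bin α β)) : ℕ :=
  Module.finrank (ZMod 2) (Submodule.span (ZMod 2) C)

/-- The dimension of the kernel of a binary code. -/
noncomputable def kerDim {α β : ℕ} (C : Set (Bin α β)) : ℕ :=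
  Module.finrank (ZMod 2) (Submodule.span (ZMod 2) (kernelK C))

/-- A `Z2Z4`-additive code `C ⊆ Z2^α × Z4^β` is of type `(α,β;γ,δ;κ)`:
`|C| = 2^(γ+2δ)`, the number of elements `x` with `2x = 0` is `2^(γ+δ)`, and `κ` is the
`Z2`-dimension of the projection onto the first `α` coordinates of `{x ∈ C | 2x = 0}`. -/
def IsTypeOf (α β γ δ κ : ℕ) (C : AddSubgroup (Amb α β)) : Prop :=
  Nat.card C = 2 ^ (γ + 2 * δ) ∧
  Nat.card {x : Amb α β | x ∈ C ∧ 2 • x = 0} = 2 ^ (γ + δ) ∧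
  Module.finrank (ZMod 2)
    (Submodule.span (ZMod 2) (Prod.fst '' {x : Amb α β | x ∈ C ∧ 2 • x = 0})) = κ

/-!
The Gray map satisfies `Φ(x + y) = Φ(x) + Φ(y) + Φ(2(x*y))`, and the correction term
`(x, y) ↦ Φ(2(x*y))` is biadditive, because `Φ` is additive on `2 · (Z2^α × Z4^β)` and
`2(2x * 2y) = 0`. Hence the span of `Φ(𝒞)` is spanned by the images of the generators together
with the correction terms of pairs of generators. For a generator `u` of order two these vanish,
`Φ(2(v*v)) = Φ(2v)`, and `Φ(2(v_j*v_k)) = Φ(v_j + v_k) - Φ(v_j) - Φ(v_k)` lies in the span of `Φ(𝒞)`.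
-/

namespace Amb

variable {α β : ℕ}

lemma four_eq_zero : (4 : Amb α β) = 0 :=
  Prod.ext (funext fun _ => show (4 : ZMod 2) = 0 by decide)
    (funext fun _ => show (4 : ZMod 4) = 0 by decide)

lemma two_mul_mul_self (x : Amb α β) : 2 * (x * x) = 2 * x :=
  Prod.ext (funext fun i => (by decide : ∀ a : ZMod 2, 2 * (a * a) = 2 * a) (x.1 i))
    (funext fun i => (by decide : ∀ a : ZMod 4, 2 * (a * a) = 2 * a) (x.2 i))

lemma two_mul_mul_two_mul (x y : Amb α β) : 2 * (2 * x * (2 * y)) = 0 := by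
  linear_combination (2 * x * y) * four_eq_zero

end Amb

section Gray

variable {α β : ℕ}

lemma grayPair_add : ∀ a b : ZMod 4,
    grayPair (a + b) = grayPair a + grayPair b + grayPair (2 * (a * b)) := by decide

lemma grayPair_neg : ∀ a : ZMod 4, grayPair (-a) = grayPair a + grayPair (2 * a) := by decide

lemma Phi_zero : (Phi 0 : Bin α β) = 0 :=
  Prod.ext rfl (funext fun _ => rfl)

lemma Phi_add (x y : Amb α β) : Phi (x + y) = Phi x + Phi y + Phi (2 * (x * y)) :=
  Prod.ext
    (funext fun i =>
      (by decide : ∀ a b : ZMod 2, a + b = a + b + 2 * (a * b)) (x.1 i) (y.1 i))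
    (funext fun i => grayPair_add (x.2 i) (y.2 i))

lemma Phi_neg (x : Amb α β) : Phi (-x) = Phi x + Phi (2 * x) :=
  Prod.ext
    (funext fun i => (by decide : ∀ a : ZMod 2, -a = a + 2 * a) (x.1 i))
    (funext fun i => grayPair_neg (x.2 i))

lemma Phi_two_mul_add (x y : Amb α β) : Phi (2 * x + 2 * y) = Phi (2 * x) + Phi (2 * y) := by
  rw [Phi_add, Amb.two_mul_mul_two_mul, Phi_zero, add_zero]

def grayCross : Amb α β →+ Amb α β →+ Bin α β :=
  AddMonoidHom.mk'
    (fun x => AddMonoidHom.mk' (fun y => Phi (2 * (x * y))) fun y z => by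
      rw [← Phi_two_mul_add, mul_add, mul_add])
    fun x y => AddMonoidHom.ext fun z => by
      simp only [AddMonoidHom.mk'_apply, AddMonoidHom.add_apply]
      rw [← Phi_two_mul_add, add_mul, mul_add]

lemma grayCross_apply (x y : Amb α β) : grayCross x y = Phi (2 * (x * y)) := rfl

lemma grayCross_comm (x y : Amb α β) : grayCross x y = grayCross y x := by
  rw [grayCross_apply, grayCross_apply, mul_comm x]

lemma grayCross_self (x : Amb α β) : grayCross x x = Phi (2 • x) := by
  rw [grayCross_apply, Amb.two_mul_mul_self, two_nsmul, two_mul]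

lemma grayCross_eq_zero_of_two_nsmul_eq_zero {x : Amb α β} (hx : 2 • x = 0) (y : Amb α β) :
    grayCross x y = 0 := by
  rw [grayCross_apply, ← mul_assoc, two_mul, ← two_nsmul, hx, zero_mul, Phi_zero]

lemma grayCross_mem_of_forall_lt {ι : Type*} [LinearOrder ι] (v : ι → Amb α β)
    {S : Submodule (ZMod 2) (Bin α β)} (hdiag : ∀ j, Phi (2 • v j) ∈ S)
    (hlt : ∀ j k, j < k → grayCross (v j) (v k) ∈ S) (j k : ι) :
    grayCross (v j) (v k) ∈ S := by
  rcases lt_trichotomy j k with hjk | rfl | hkj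
  · exact hlt j k hjk
  · exact grayCross_self (v j) ▸ hdiag j
  · exact grayCross_comm (v k) (v j) ▸ hlt k j hkj

lemma grayCross_mem_of_mem_closure {s : Set (Amb α β)} {S : Submodule (ZMod 2) (Bin α β)}
    (hs : ∀ g ∈ s, ∀ h ∈ s, grayCross g h ∈ S) {x y : Amb α β}
    (hx : x ∈ AddSubgroup.closure s) (hy : y ∈ AddSubgroup.closure s) :
    grayCross x y ∈ S := by
  have hgen : ∀ g ∈ s, AddSubgroup.closure s ≤ S.toAddSubgroup.comap (grayCross g) :=
    fun g hg => (AddSubgroup.closure_le _).2 fun h hh => hs g hg h hh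
  have hflip : AddSubgroup.closure s ≤ S.toAddSubgroup.comap (grayCross.flip y) :=
    (AddSubgroup.closure_le _).2 fun g hg => hgen g hg hy
  exact hflip hx

lemma Phi_mem_of_mem_closure {s : Set (Amb α β)} {S : Submodule (ZMod 2) (Bin α β)}
    (hs : ∀ g ∈ s, Phi g ∈ S) (hcross : ∀ g ∈ s, ∀ h ∈ s, grayCross g h ∈ S) {x : Amb α β}
    (hx : x ∈ AddSubgroup.closure s) : Phi x ∈ S := by
  induction hx using AddSubgroup.closure_induction with
  | mem g hg => exact hs g hg
  | zero => simpa only [Phi_zero] using S.zero_mem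
  | add x y hx hy ihx ihy =>
    rw [Phi_add]
    exact add_mem (add_mem ihx ihy) (grayCross_mem_of_mem_closure hcross hx hy)
  | neg x hx ihx =>
    have hxx := grayCross_mem_of_mem_closure hcross hx hx
    rw [grayCross_apply, Amb.two_mul_mul_self] at hxx
    rw [Phi_neg]
    exact add_mem ihx hxx

lemma grayCross_mem_span_image (C : AddSubgroup (Amb α β)) {x y : Amb α β}
    (hx : x ∈ C) (hy : y ∈ C) : grayCross x y ∈ Submodule.span (ZMod 2) (Phi '' C) := by
  have hmem : ∀ z ∈ C, Phi z ∈ Submodule.span (ZMod 2) (Phi '' C) :=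
    fun z hz => Submodule.subset_span ⟨z, hz, rfl⟩
  have hsum := Phi_add x y
  rw [grayCross_apply, eq_sub_of_add_eq' hsum.symm]
  exact sub_mem (hmem _ (add_mem hx hy)) (add_mem (hmem x hx) (hmem y hy))

end Gray

theorem span_gray_image_eq_general (α β γ δ : ℕ) (u : Fin γ → Amb α β) (v : Fin δ → Amb α β)
    (hu : ∀ i, 2 • u i = 0) :
    Submodule.span (ZMod 2)
        (Phi '' (AddSubgroup.closure (Set.range u ∪ Set.range v) : Set (Amb α β))) =
      Submodule.span (ZMod 2)
        ((Set.range fun i => Phi (u i)) ∪ (Set.range fun j => Phi (v j)) ∪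
          (Set.range fun j => Phi (2 • v j)) ∪
          {w | ∃ j k, j < k ∧ w = Phi (2 * (v j * v k))}) := by
  set S := Submodule.span (ZMod 2)
    ((Set.range fun i => Phi (u i)) ∪ (Set.range fun j => Phi (v j)) ∪
      (Set.range fun j => Phi (2 • v j)) ∪ {w | ∃ j k, j < k ∧ w = Phi (2 * (v j * v k))})
  apply le_antisymm
  · rw [Submodule.span_le]
    rintro _ ⟨x, hx, rfl⟩
    refine Phi_mem_of_mem_closure ?_ ?_ hx
    · rintro _ (⟨i, rfl⟩ | ⟨j, rfl⟩)
      · exact Submodule.subset_span (Or.inl (Or.inl (Or.inl ⟨i, rfl⟩)))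
      · exact Submodule.subset_span (Or.inl (Or.inl (Or.inr ⟨j, rfl⟩)))
    · rintro _ (⟨i, rfl⟩ | ⟨j, rfl⟩) _ hh
      · rw [grayCross_eq_zero_of_two_nsmul_eq_zero (hu i)]; exact S.zero_mem
      rcases hh with ⟨i, rfl⟩ | ⟨k, rfl⟩
      · rw [grayCross_comm, grayCross_eq_zero_of_two_nsmul_eq_zero (hu i)]; exact S.zero_mem
      · exact grayCross_mem_of_forall_lt v
          (fun j => Submodule.subset_span (Or.inl (Or.inr ⟨j, rfl⟩)))
          (fun j k hjk => Submodule.subset_span (Or.inr ⟨j, k, hjk, rfl⟩)) j k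
  · rw [Submodule.span_le]
    have hv_mem : ∀ j, v j ∈ AddSubgroup.closure (Set.range u ∪ Set.range v) :=
      fun j => AddSubgroup.subset_closure (Or.inr ⟨j, rfl⟩)
    rintro _ (((⟨i, rfl⟩ | ⟨j, rfl⟩) | ⟨j, rfl⟩) | ⟨j, k, -, rfl⟩)
    · exact Submodule.subset_span ⟨_, AddSubgroup.subset_closure (Or.inl ⟨i, rfl⟩), rfl⟩
    · exact Submodule.subset_span ⟨_, hv_mem j, rfl⟩
    · exact Submodule.subset_span ⟨_, nsmul_mem (hv_mem j) 2, rfl⟩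
    · exact grayCross_mem_span_image _ (hv_mem j) (hv_mem k)

/-- If `𝒞` is generated by `u₁,…,u_γ` of order at most two and `v₁,…,v_δ` of
order four, then the linear span of `Φ(𝒞)` is spanned by the `Φ(u_i)`, `Φ(v_j)`, `Φ(2v_j)`
and `Φ(2(v_j*v_k))` for `j < k`. -/
theorem span_gray_image_eq (α β γ δ : ℕ) (u : Fin γ → Amb α β) (v : Fin δ → Amb α β)
    (hu : ∀ i, 2 • u i = 0) (hv : ∀ j, 2 • v j ≠ 0) :
    Submodule.span (ZMod 2)
        (Phi '' (AddSubgroup.closure (Set.range u ∪ Set.range v) : Set (Amb α β))) =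
      Submodule.span (ZMod 2)
        ((Set.range fun i => Phi (u i)) ∪ (Set.range fun j => Phi (v j)) ∪
          (Set.range fun j => Phi (2 • v j)) ∪
          {w | ∃ j k, j < k ∧ w = Phi (2 * (v j * v k))}) :=
  span_gray_image_eq_general α β γ δ u v hu
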